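/- arXiv:2102.10095 — 3 statements merged into one kernel-verified Lean document; each statement's English description precedes it below -/
import Mathlib

section
/- For every k ∈ ℕ and m ∈ ℕ₀, the even moment e_{k,2m} = ∫₀¹ 2(sin(kπt))² t^{2m} dt equals 1/(2m+1) + Σ_{n=1}^{m} (−1)ⁿ (2m)! / ((2(m−n)+1)! · 2^{2n}) · 1/(k^{2n} π^{2n}). -/
open Real MeasureTheory intervalIntegral Finset

/-- For `k ∈ ℕ` (k ≥ 1) and `n ∈ ℕ₀`, the moment `e_{k,n} = ∫₀¹ 2 (sin(kπt))² tⁿ dt`. -/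
noncomputable def bridgeMoment (k n : ℕ) : ℝ :=
  ∫ t in (0:ℝ)..1, 2 * (Real.sin (k * Real.pi * t))^2 * t^n

/-! Writing `2 sin²(kπt) = 1 - cos(bt)` with `b = 2kπ`, we get `e_{k,n} = 1/(n+1) - C_n` for the
cosine moments `C_n = ∫₀¹ tⁿ cos(bt) dt`. Integrating by parts twice and using `sin b = 0`,
`cos b = 1` gives `C_{n+2} = (n+2)/b² - (n+2)(n+1)/b² · C_n` with `C_0 = 0`, and unrolling this
recursion from `C_0` yields the finite sum. -/

theorem Finset.sum_Icc_one_succ {M : Type*} [AddCommMonoid M] (f : ℕ → M) (m : ℕ) :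
    ∑ n ∈ Icc 1 (m + 1), f n = f 1 + ∑ n ∈ Icc 1 m, f (n + 1) := by
  rw [← Ico_add_one_right_eq_Icc, sum_eq_sum_Ico_succ_bot (by omega), ← Ico_add_one_right_eq_Icc,
    sum_Ico_add']

theorem integral_pow_succ_mul_deriv {v v' : ℝ → ℝ} (hv : ∀ x, HasDerivAt v (v' x) x)
    (hv' : Continuous v') (n : ℕ) :
    ∫ t in (0:ℝ)..1, t ^ (n + 1) * v' t = v 1 - (n + 1) * ∫ t in (0:ℝ)..1, t ^ n * v t := by
  rw [integral_mul_deriv_eq_deriv_mul (u' := fun t => (n + 1) * t ^ n)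
    (fun x _ => by simpa using hasDerivAt_pow (n + 1) x) (fun x _ => hv x)
    ((by fun_prop : Continuous fun t : ℝ => (n + 1) * t ^ n).intervalIntegrable _ _)
    (hv'.intervalIntegrable _ _)]
  simp [mul_assoc, intervalIntegral.integral_const_mul]

noncomputable def cosMoment (b : ℝ) (n : ℕ) : ℝ := ∫ t in (0:ℝ)..1, t ^ n * cos (b * t)

noncomputable def sinMoment (b : ℝ) (n : ℕ) : ℝ := ∫ t in (0:ℝ)..1, t ^ n * sin (b * t)

section
variable {b : ℝ}

theorem cosMoment_zero (hb : b ≠ 0) : cosMoment b 0 = sin b / b := by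
  simp [cosMoment, integral_comp_mul_left (fun x => cos x) hb, div_eq_inv_mul]

theorem cosMoment_succ (hb : b ≠ 0) (n : ℕ) :
    cosMoment b (n + 1) = sin b / b - (n + 1) / b * sinMoment b n := by
  have hv (x : ℝ) : HasDerivAt (fun t => sin (b * t) / b) (cos (b * x)) x :=
    (((hasDerivAt_id' x).const_mul b).sin.div_const b).congr_deriv (by field_simp)
  rw [cosMoment, integral_pow_succ_mul_deriv hv (by fun_prop), sinMoment]
  simp only [mul_one, mul_div_assoc', intervalIntegral.integral_div]
  ring

theorem sinMoment_succ (hb : b ≠ 0) (n : ℕ) :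
    sinMoment b (n + 1) = -cos b / b + (n + 1) / b * cosMoment b n := by
  have hv (x : ℝ) : HasDerivAt (fun t => -cos (b * t) / b) (sin (b * x)) x :=
    (((hasDerivAt_id' x).const_mul b).cos.neg.div_const b).congr_deriv (by field_simp)
  rw [sinMoment, integral_pow_succ_mul_deriv hv (by fun_prop), cosMoment]
  simp only [mul_one, neg_div, mul_neg, intervalIntegral.integral_neg, mul_div_assoc',
    intervalIntegral.integral_div]
  ring

theorem cosMoment_add_two (hb : b ≠ 0) (hs : sin b = 0) (hc : cos b = 1) (n : ℕ) :
    cosMoment b (n + 2) = (n + 2) / b ^ 2 - (n + 2) * (n + 1) / b ^ 2 * cosMoment b n := by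
  rw [cosMoment_succ hb, sinMoment_succ hb, hs, hc]
  push_cast
  field_simp
  ring

theorem cosMoment_two_mul (hb : b ≠ 0) (hs : sin b = 0) (hc : cos b = 1) (m : ℕ) :
    cosMoment b (2 * m) =
      -∑ n ∈ Icc 1 m,
        (-1) ^ n * ((2 * m).factorial / (2 * (m - n) + 1).factorial : ℝ) / b ^ (2 * n) := by
  induction m with
  | zero => simp [cosMoment_zero hb, hs]
  | succ m ih =>
    have hfac : ((2 * m + 2).factorial : ℝ) = (2 * m + 2) * (2 * m + 1) * (2 * m).factorial := by
      rw [Nat.factorial_succ, Nat.factorial_succ]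
      push_cast
      ring
    rw [show 2 * (m + 1) = 2 * m + 2 by ring, cosMoment_add_two hb hs hc, ih, sum_Icc_one_succ,
      neg_add, mul_neg, sub_neg_eq_add, mul_sum, ← sum_neg_distrib, hfac]
    push_cast
    congr 1
    · rw [Nat.factorial_succ]
      push_cast
      field_simp
    · refine sum_congr rfl fun n _ => ?_
      field_simp
      ring

end

theorem bridgeMoment_eq_sub_cosMoment (k n : ℕ) :
    bridgeMoment k n = 1 / (n + 1) - cosMoment (2 * k * π) n := by
  have hintegrand (t : ℝ) :
      2 * sin (k * π * t) ^ 2 * t ^ n = t ^ n - t ^ n * cos (2 * k * π * t) := by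
    rw [sin_sq_eq_half_sub]
    ring_nf
  simp only [bridgeMoment, hintegrand, cosMoment]
  rw [intervalIntegral.integral_sub (Continuous.intervalIntegrable (by fun_prop) _ _)
    (Continuous.intervalIntegrable (by fun_prop) _ _), integral_pow]
  simp

theorem even_moment_formula (k : ℕ) (hk : 1 ≤ k) (m : ℕ) :
    bridgeMoment k (2 * m) = 1 / (2 * (m : ℝ) + 1) +
      ∑ n ∈ Finset.Icc 1 m,
        (-1 : ℝ)^n * (Nat.factorial (2 * m)) /
          ((Nat.factorial (2 * (m - n) + 1)) * 2^(2 * n)) *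
            (1 / ((k : ℝ)^(2 * n) * Real.pi^(2 * n))) := by
  have hb : 2 * k * π ≠ 0 := by positivity
  have hs : sin (2 * k * π) = 0 := by simpa using sin_nat_mul_pi (2 * k)
  have hc : cos (2 * k * π) = 1 := by
    rw [show 2 * (k : ℝ) * π = k * (2 * π) by ring]
    exact cos_nat_mul_two_pi k
  rw [bridgeMoment_eq_sub_cosMoment, cosMoment_two_mul hb hs hc, sub_neg_eq_add]
  push_cast
  congr 1
  refine sum_congr rfl fun n _ => ?_
  rw [mul_pow, mul_pow]
  ring
end

section
/- For all N ∈ ℕ (N ≥ 1) and all t ∈ (0, 2π), the partial sum error satisfies N · |(π − t)/2 − Σ_{k=1}^{N} sin(kt)/k| ≤ 2N / ((2N+1) sin(t/2)); in particular, for fixed ε > 0 this is uniformly bounded by 1/sin(ε/2) for t ∈ [ε, 2π − ε]. -/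
/-!
The error `R(t) = (π - t)/2 - Σ_{k ≤ N} sin(kt)/k` vanishes at `π`, is odd about `π`, and by
the Dirichlet kernel identity has derivative `-sin((N + 1/2) t) / (2 sin(t/2))`. With
`φ(t) = 1 / ((2N + 1) sin(t/2))` this makes `R - cos((N + 1/2) t) φ` have derivative
`-cos((N + 1/2) t) φ'`, an integration by parts in differential form. On `[π, 2π)` the
function `φ` is increasing, so this remainder is bounded by `φ(t)`, and hence
`|R(t)| ≤ 2 φ(t)`.
-/

open Real Finset

noncomputable def sawtoothError (N : ℕ) (t : ℝ) : ℝ :=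
  (π - t) / 2 - ∑ k ∈ Icc 1 N, sin (k * t) / k

noncomputable def sawtoothEnvelope (N : ℕ) (t : ℝ) : ℝ :=
  ((2 * N + 1) * sin (t / 2))⁻¹

theorem sin_half_mul_dirichletKernel (N : ℕ) (s : ℝ) :
    2 * sin (s / 2) * (1 / 2 + ∑ k ∈ Icc 1 N, cos (k * s)) = sin ((N + 1 / 2) * s) := by
  induction N with
  | zero => simp only [CharP.cast_eq_zero, zero_add, Icc_eq_empty_of_lt one_pos, sum_empty]; ring_nf
  | succ n ih =>
    have telescope := sin_sub_sin ((n + 1 + 1 / 2) * s) ((n + 1 / 2) * s)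
    rw [show ((n + 1 + 1 / 2) * s - (n + 1 / 2) * s) / 2 = s / 2 by ring,
      show ((n + 1 + 1 / 2) * s + (n + 1 / 2) * s) / 2 = (n + 1) * s by ring] at telescope
    rw [sum_Icc_succ_top (by omega)]
    push_cast
    linear_combination ih - telescope

theorem sawtoothError_pi (N : ℕ) : sawtoothError N π = 0 := by
  simp [sawtoothError, sin_nat_mul_pi]

theorem sawtoothError_two_pi_sub (N : ℕ) (t : ℝ) :
    sawtoothError N (2 * π - t) = -sawtoothError N t := by
  have hk (k : ℕ) : sin (k * (2 * π - t)) = -sin (k * t) := by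
    rw [← sin_neg, ← (sin_periodic.nat_mul k) (-(k * t))]
    ring_nf
  simp only [sawtoothError, hk, neg_div, sum_neg_distrib]
  ring

theorem sawtoothEnvelope_pos (N : ℕ) {t : ℝ} (ht : t ∈ Set.Ioo 0 (2 * π)) :
    0 < sawtoothEnvelope N t :=
  inv_pos.2 <| mul_pos (by positivity) <|
    sin_pos_of_pos_of_lt_pi (by linarith [ht.1]) (by linarith [ht.2])

theorem sawtoothEnvelope_two_pi_sub (N : ℕ) (t : ℝ) :
    sawtoothEnvelope N (2 * π - t) = sawtoothEnvelope N t := by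
  rw [sawtoothEnvelope, sawtoothEnvelope, show (2 * π - t) / 2 = π - t / 2 by ring, sin_pi_sub]

theorem hasDerivAt_sawtoothError (N : ℕ) (s : ℝ) :
    HasDerivAt (sawtoothError N) (-(1 / 2) - ∑ k ∈ Icc 1 N, cos (k * s)) s := by
  have hk (k : ℕ) (hk : k ∈ Icc 1 N) :
      HasDerivAt (fun u : ℝ => sin (k * u) / k) (cos (k * s)) s := by
    have hk0 : (k : ℝ) ≠ 0 := by have := (mem_Icc.1 hk).1; positivity
    refine (((hasDerivAt_id s).const_mul (k : ℝ)).sin.div_const (k : ℝ)).congr_deriv ?_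
    simp [hk0]
  have hlin : HasDerivAt (fun u : ℝ => (π - u) / 2) (-(1 / 2)) s :=
    (((hasDerivAt_const s π).sub (hasDerivAt_id s)).div_const 2).congr_deriv (by ring)
  exact hlin.sub (HasDerivAt.fun_sum hk)

theorem hasDerivAt_sawtoothEnvelope (N : ℕ) {s : ℝ} (hs : sin (s / 2) ≠ 0) :
    HasDerivAt (sawtoothEnvelope N)
      (-((2 * N + 1) * (cos (s / 2) / 2)) / ((2 * N + 1) * sin (s / 2)) ^ 2) s := by
  have h : HasDerivAt (fun u => u / 2) (1 / 2) s := (hasDerivAt_id s).div_const 2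
  refine ((h.sin.const_mul (2 * N + 1 : ℝ)).inv (mul_ne_zero (by positivity) hs)).congr_deriv ?_
  ring

theorem hasDerivAt_sawtoothError_sub_cos_mul_sawtoothEnvelope (N : ℕ) {s φ' : ℝ}
    (hs : sin (s / 2) ≠ 0) (hφ : HasDerivAt (sawtoothEnvelope N) φ' s) :
    HasDerivAt (fun u => sawtoothError N u - cos ((N + 1 / 2) * u) * sawtoothEnvelope N u)
      (-cos ((N + 1 / 2) * s) * φ') s := by
  have hcos : HasDerivAt (fun u => cos ((N + 1 / 2) * u))
      (-sin ((N + 1 / 2) * s) * (N + 1 / 2)) s :=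
    ((hasDerivAt_id s).const_mul _).cos.congr_deriv (by simp)
  refine ((hasDerivAt_sawtoothError N s).sub (hcos.mul hφ)).congr_deriv ?_
  rw [sawtoothEnvelope, ← sin_half_mul_dirichletKernel N s]
  generalize ∑ k ∈ Icc 1 N, cos (k * s) = S
  field_simp
  ring

theorem abs_sawtoothError_sub_cos_mul_sawtoothEnvelope_le (N : ℕ) {t : ℝ}
    (ht : t ∈ Set.Ico π (2 * π)) :
    |sawtoothError N t - cos ((N + 1 / 2) * t) * sawtoothEnvelope N t| ≤
      sawtoothEnvelope N t := by
  have hsin {s : ℝ} (hs : s ∈ Set.Icc π t) : 0 < sin (s / 2) :=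
    sin_pos_of_pos_of_lt_pi (by linarith [pi_pos, hs.1]) (by linarith [hs.2, ht.2])
  have hφ {s : ℝ} (hs : s ∈ Set.Icc π t) := hasDerivAt_sawtoothEnvelope N (hsin hs).ne'
  have hF {s : ℝ} (hs : s ∈ Set.Icc π t) :=
    hasDerivAt_sawtoothError_sub_cos_mul_sawtoothEnvelope N (hsin hs).ne' (hφ hs)
  refine image_norm_le_of_norm_deriv_right_le_deriv_boundary'
    (fun s hs => (hF hs).continuousAt.continuousWithinAt)
    (fun s hs => (hF (Set.Ico_subset_Icc_self hs)).hasDerivWithinAt)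
    ?_ (fun s hs => (hφ hs).continuousAt.continuousWithinAt)
    (fun s hs => (hφ (Set.Ico_subset_Icc_self hs)).hasDerivWithinAt) ?_ ⟨ht.1, le_rfl⟩
  · have hφπ := sawtoothEnvelope_pos N ⟨pi_pos, by linarith [pi_pos]⟩
    rw [Real.norm_eq_abs, sawtoothError_pi, zero_sub, abs_neg, abs_mul, abs_of_pos hφπ]
    exact mul_le_of_le_one_left hφπ.le (abs_cos_le_one _)
  · intro s hs
    have hcos : cos (s / 2) ≤ 0 :=
      cos_nonpos_of_pi_div_two_le_of_le (by linarith [hs.1]) (by linarith [pi_pos, hs.2, ht.2])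
    have hφ'_nonneg :
        0 ≤ -((2 * N + 1) * (cos (s / 2) / 2)) / ((2 * N + 1) * sin (s / 2)) ^ 2 :=
      div_nonneg (by nlinarith) (sq_nonneg _)
    rw [Real.norm_eq_abs, abs_mul, abs_neg, abs_of_nonneg hφ'_nonneg]
    exact mul_le_of_le_one_left hφ'_nonneg (abs_cos_le_one _)

theorem abs_sawtoothError_le_of_mem_Ico (N : ℕ) {t : ℝ} (ht : t ∈ Set.Ico π (2 * π)) :
    |sawtoothError N t| ≤ 2 * sawtoothEnvelope N t := by
  have hφ := sawtoothEnvelope_pos N ⟨by linarith [pi_pos, ht.1], ht.2⟩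
  have hcos : |cos ((N + 1 / 2) * t) * sawtoothEnvelope N t| ≤ sawtoothEnvelope N t := by
    rw [abs_mul, abs_of_pos hφ]
    exact mul_le_of_le_one_left hφ.le (abs_cos_le_one _)
  calc |sawtoothError N t|
      = |(sawtoothError N t - cos ((N + 1 / 2) * t) * sawtoothEnvelope N t)
          + cos ((N + 1 / 2) * t) * sawtoothEnvelope N t| := by rw [sub_add_cancel]
    _ ≤ sawtoothEnvelope N t + sawtoothEnvelope N t :=
        (abs_add_le _ _).trans (add_le_add
          (abs_sawtoothError_sub_cos_mul_sawtoothEnvelope_le N ht) hcos)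
    _ = 2 * sawtoothEnvelope N t := by ring

theorem abs_sawtoothError_le (N : ℕ) {t : ℝ} (ht : t ∈ Set.Ioo 0 (2 * π)) :
    |sawtoothError N t| ≤ 2 * sawtoothEnvelope N t := by
  rcases le_or_gt π t with hπt | htπ
  · exact abs_sawtoothError_le_of_mem_Ico N ⟨hπt, ht.2⟩
  · have h := abs_sawtoothError_le_of_mem_Ico N (t := 2 * π - t)
      ⟨by linarith, by linarith [ht.1]⟩
    rwa [sawtoothError_two_pi_sub, abs_neg, sawtoothEnvelope_two_pi_sub] at h

theorem sin_le_sin_of_le_of_le_pi_sub {x y : ℝ} (hx : -(π / 2) ≤ x) (hxy : x ≤ y)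
    (hy : y ≤ π - x) :
    sin x ≤ sin y := by
  rcases le_total y (π / 2) with hy' | hy'
  · exact sin_le_sin_of_le_of_le_pi_div_two hx hy' hxy
  · rw [← sin_pi_sub y]
    exact sin_le_sin_of_le_of_le_pi_div_two hx (by linarith) (by linarith)

/-- For `N ≥ 1` and `t ∈ (0, 2π)`,
`N · |(π − t)/2 − Σ_{k=1}^N sin(kt)/k| ≤ 2N/((2N+1) sin(t/2))`; in particular,
for fixed `ε > 0` this is uniformly bounded by `1/sin(ε/2)` on `[ε, 2π − ε]`. -/
theorem sawtooth_partial_sum_bound :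
    (∀ N : ℕ, 1 ≤ N → ∀ t : ℝ, t ∈ Set.Ioo 0 (2 * Real.pi) →
      (N : ℝ) * |(Real.pi - t) / 2 - ∑ k ∈ Finset.Icc 1 N, Real.sin (k * t) / k| ≤
        2 * N / ((2 * N + 1) * Real.sin (t / 2))) ∧
    (∀ ε : ℝ, 0 < ε → ∀ N : ℕ, 1 ≤ N →
      ∀ t : ℝ, t ∈ Set.Icc ε (2 * Real.pi - ε) →
        (N : ℝ) * |(Real.pi - t) / 2 - ∑ k ∈ Finset.Icc 1 N, Real.sin (k * t) / k| ≤
          1 / Real.sin (ε / 2)) := by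
  have bound (N : ℕ) {t : ℝ} (ht : t ∈ Set.Ioo 0 (2 * π)) :
      N * |sawtoothError N t| ≤ 2 * N / ((2 * N + 1) * sin (t / 2)) :=
    calc N * |sawtoothError N t| ≤ N * (2 * sawtoothEnvelope N t) := by
          gcongr; exact abs_sawtoothError_le N ht
      _ = 2 * N / ((2 * N + 1) * sin (t / 2)) := by rw [sawtoothEnvelope]; ring
  refine ⟨fun N _ t ht => bound N ht, fun ε hε N _ t ht => ?_⟩
  have ht' : t ∈ Set.Ioo 0 (2 * π) := ⟨by linarith [ht.1], by linarith [ht.2]⟩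
  have hsinε : 0 < sin (ε / 2) :=
    sin_pos_of_pos_of_lt_pi (by linarith) (by linarith [ht.1, ht.2, pi_pos])
  have hsinεt : sin (ε / 2) ≤ sin (t / 2) :=
    sin_le_sin_of_le_of_le_pi_sub (by linarith [pi_pos]) (by linarith [ht.1]) (by linarith [ht.2])
  have hsint : 0 < sin (t / 2) := hsinε.trans_le hsinεt
  calc N * |sawtoothError N t| ≤ 2 * N / ((2 * N + 1) * sin (t / 2)) := bound N ht'
    _ ≤ 1 / sin (t / 2) := by
        rw [div_le_div_iff₀ (by positivity) hsint]
        nlinarith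
    _ ≤ 1 / sin (ε / 2) := one_div_le_one_div_of_le hsinε hsinεt
end

section
/- For all s, t ∈ [0,1], the limit as N → ∞ of N · (min(s,t) − st − Σ_{k=1}^{N} 2 sin(kπs) sin(kπt)/(k²π²)) equals 1/π² if s = t ∈ (0,1), and 0 otherwise. -/
/-!
Since `2 sin(kπs) sin(kπt) = cos(kπ(s - t)) - cos(kπ(s + t))` and
`∑ cos(2πkx) / k² = π² (x² - x + 1/6)` on `[0, 1]`, the rescaled error equals
`N (R_N(a) - R_N(b)) / π²` with `a = |s - t| / 2`, `b = (s + t) / 2`, where `R_N(x)` is the tail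
of this cosine series after `N` terms. For `x ∈ (0, 1)` the partial sums of `cos(2πkx)` are
bounded, so Abel summation gives `R_N(x) = O(1/N²)`; for `x ∈ {0, 1}` the tail is
`∑_{k > N} 1/k²`, which lies between `1/(N+1)` and `1/N`. Finally `a ∈ (0, 1)` iff `s ≠ t`,
and `b ∈ {0, 1}` iff `s = t ∈ {0, 1}`.
-/

open Real Finset Filter Topology
open scoped Classical

theorem HasSum.tendsto_sum_Ioc {α : Type*} [AddCommGroup α] [TopologicalSpace α]
    [IsTopologicalAddGroup α] {f : ℕ → α} {S : α} (hf : HasSum f S) (hf0 : f 0 = 0) (N : ℕ) :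
    Tendsto (fun M => ∑ k ∈ Ioc N M, f k) atTop (𝓝 (S - ∑ k ∈ Icc 1 N, f k)) := by
  have hIcc : ∀ M, Icc 1 M = Ioc 0 M := fun M => Icc_add_one_left_eq_Ioc 0 M
  have hsum : Tendsto (fun M => ∑ k ∈ Icc 1 M, f k) atTop (𝓝 S) := by
    refine (hf.tendsto_sum_nat.comp (tendsto_add_atTop_nat 1)).congr fun M => ?_
    rw [Function.comp_apply, range_eq_Ico, sum_eq_sum_Ico_succ_bot (Nat.succ_pos M), hf0,
      _root_.zero_add, Nat.succ_eq_add_one, Ico_add_one_right_eq_Icc]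
  refine (hsum.sub_const _).congr' ?_
  filter_upwards [eventually_ge_atTop N] with M hM
  rw [hIcc, hIcc, ← sum_Ioc_consecutive f (Nat.zero_le N) hM]
  abel

theorem norm_sum_Ioc_smul_le_of_antitoneOn {E : Type*} [NormedAddCommGroup E] [NormedSpace ℝ E]
    {a : ℕ → ℝ} {z : ℕ → E} {b : ℝ} {m n : ℕ} (ha : AntitoneOn a (Set.Ioi m))
    (ha0 : ∀ k, 0 ≤ a k) (hz : ∀ k, ‖∑ i ∈ range k, z i‖ ≤ b) :
    ‖∑ i ∈ Ioc m n, a i • z i‖ ≤ 2 * b * a (m + 1) := by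
  have hb : 0 ≤ b := (norm_nonneg _).trans (hz 0)
  rcases le_or_gt n m with hnm | hmn
  · rw [Ioc_eq_empty_of_le hnm, sum_empty, norm_zero]
    exact mul_nonneg (mul_nonneg zero_le_two hb) (ha0 _)
  have htel : ∑ i ∈ Ioc m (n - 1), (a i - a (i + 1)) = a (m + 1) - a n := by
    rw [← Ico_add_one_add_one_eq_Ioc, Nat.sub_add_cancel (Nat.one_le_of_lt hmn), ← neg_sub,
      ← Finset.sum_Ico_sub a hmn, ← sum_neg_distrib]
    simp only [neg_sub, Nat.succ_eq_add_one]
  rw [sum_Ioc_by_parts a z hmn]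
  calc _ ≤ a n * b + a (m + 1) * b + ∑ i ∈ Ioc m (n - 1), (a i - a (i + 1)) * b := by
        refine (norm_sub_le _ _).trans (add_le_add ((norm_sub_le _ _).trans (add_le_add ?_ ?_))
          ((norm_sum_le _ _).trans (sum_le_sum fun i hi => ?_)))
        · rw [norm_smul, Real.norm_of_nonneg (ha0 n)]
          exact mul_le_mul_of_nonneg_left (hz _) (ha0 n)
        · rw [norm_smul, Real.norm_of_nonneg (ha0 _)]
          exact mul_le_mul_of_nonneg_left (hz _) (ha0 _)
        · have hi' : m < i := (mem_Ioc.mp hi).1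
          have hstep : a (i + 1) ≤ a i :=
            ha (Set.mem_Ioi.mpr hi') (Set.mem_Ioi.mpr (by omega)) (by omega)
          rw [norm_smul, Real.norm_of_nonpos (by linarith), neg_sub]
          exact mul_le_mul_of_nonneg_left (hz _) (by linarith)
    _ = 2 * b * a (m + 1) := by rw [← sum_mul, htel]; ring

theorem hasSum_cos_div_sq {x : ℝ} (hx : x ∈ Set.Icc (0 : ℝ) 1) :
    HasSum (fun k : ℕ => cos (2 * π * k * x) / k ^ 2) (π ^ 2 * (x ^ 2 - x + 1 / 6)) := by
  convert hasSum_one_div_nat_pow_mul_cos one_ne_zero hx using 1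
  · ext k; ring
  · rw [← bernoulliFun, mul_one, bernoulliFun_two, Nat.factorial_two]
    push_cast
    ring

theorem abs_sum_range_cos_mul_le {θ : ℝ} (hθ : cos θ ≠ 1) (n : ℕ) :
    |∑ k ∈ range n, cos (k * θ)| ≤ 2 / ‖Complex.exp (θ * Complex.I) - 1‖ := by
  set z := Complex.exp (θ * Complex.I)
  have hz : z ≠ 1 := fun h => hθ <| by
    simpa only [z, Complex.exp_ofReal_mul_I_re, Complex.one_re] using congrArg Complex.re h
  have hpow : ∀ k : ℕ, z ^ k = Complex.exp ((k * θ : ℝ) * Complex.I) := fun k => by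
    rw [← Complex.exp_nat_mul]; push_cast; ring_nf
  have hre : ∑ k ∈ range n, cos (k * θ) = (∑ k ∈ range n, z ^ k).re := by
    simp only [Complex.re_sum, hpow, Complex.exp_ofReal_mul_I_re]
  have hnorm : ‖z ^ n - 1‖ ≤ 2 := by
    refine (norm_sub_le _ _).trans ?_
    rw [hpow, Complex.norm_exp_ofReal_mul_I, norm_one]; norm_num
  rw [hre, geom_sum_eq hz]
  refine (Complex.abs_re_le_norm _).trans ?_
  rw [norm_div]
  gcongr

theorem antitoneOn_inv_sq : AntitoneOn (fun k : ℕ => ((k : ℝ) ^ 2)⁻¹) (Set.Ioi 0) := by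
  intro k hk l _ hkl
  have : (0:ℝ) < k := by exact_mod_cast hk
  dsimp only
  gcongr

theorem sub_le_sum_Ioc_inv_sq {N M : ℕ} (h : N ≤ M) :
    ((N : ℝ) + 1)⁻¹ - ((M : ℝ) + 1)⁻¹ ≤ ∑ k ∈ Ioc N M, ((k : ℝ) ^ 2)⁻¹ := by
  induction M, h using Nat.le_induction with
  | base => simp
  | succ M hM ih =>
    rw [sum_Ioc_succ_top hM]
    have hstep : ((M : ℝ) + 1)⁻¹ - ((M : ℝ) + 1 + 1)⁻¹ ≤ (((M + 1 : ℕ) : ℝ) ^ 2)⁻¹ := by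
      push_cast
      rw [inv_sub_inv (by positivity) (by positivity), ← one_div,
        div_le_div_iff₀ (by positivity) (by positivity)]
      nlinarith
    push_cast at hstep ⊢
    linarith

theorem tendsto_natCast_mul_zeta_two_tail :
    Tendsto (fun N : ℕ => (N : ℝ) * (π ^ 2 / 6 - ∑ k ∈ Icc 1 N, ((k : ℝ) ^ 2)⁻¹)) atTop (𝓝 1) := by
  have htail := (show HasSum (fun k : ℕ => ((k : ℝ) ^ 2)⁻¹) (π ^ 2 / 6) by
    simpa only [one_div] using hasSum_zeta_two).tendsto_sum_Ioc (by simp)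
  have hlower : ∀ N : ℕ, ((N : ℝ) + 1)⁻¹ ≤ π ^ 2 / 6 - ∑ k ∈ Icc 1 N, ((k : ℝ) ^ 2)⁻¹ := by
    intro N
    have hlim : Tendsto (fun M : ℕ => ((N : ℝ) + 1)⁻¹ - ((M : ℝ) + 1)⁻¹) atTop
        (𝓝 (((N : ℝ) + 1)⁻¹ - 0)) := by
      simpa only [one_div] using
        (tendsto_const_nhds (x := ((N : ℝ) + 1)⁻¹)).sub tendsto_one_div_add_atTop_nhds_zero_nat
    rw [sub_zero] at hlim
    refine le_of_tendsto_of_tendsto hlim (htail N) ?_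
    filter_upwards [eventually_ge_atTop N] with M hM using sub_le_sum_Ioc_inv_sq hM
  have hupper : ∀ N : ℕ, 0 < N → π ^ 2 / 6 - ∑ k ∈ Icc 1 N, ((k : ℝ) ^ 2)⁻¹ ≤ (N : ℝ)⁻¹ := by
    intro N hN
    refine le_of_tendsto (htail N) ?_
    filter_upwards [eventually_ge_atTop N] with M hM
    exact (sum_Ioc_inv_sq_le_sub hN.ne' hM).trans (sub_le_self _ (by positivity))
  refine tendsto_of_tendsto_of_tendsto_of_le_of_le' (tendsto_natCast_div_add_atTop (1 : ℝ))
    tendsto_const_nhds ?_ ?_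
  · filter_upwards with N
    rw [div_eq_mul_inv]
    exact mul_le_mul_of_nonneg_left (hlower N) N.cast_nonneg
  · filter_upwards [eventually_gt_atTop 0] with N hN
    have : (0 : ℝ) < N := by exact_mod_cast hN
    calc (N : ℝ) * _ ≤ N * (N : ℝ)⁻¹ := mul_le_mul_of_nonneg_left (hupper N hN) this.le
      _ = 1 := mul_inv_cancel₀ this.ne'

noncomputable def cosSeriesTail (x : ℝ) (N : ℕ) : ℝ :=
  π ^ 2 * (x ^ 2 - x + 1 / 6) - ∑ k ∈ Icc 1 N, cos (2 * π * k * x) / k ^ 2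

theorem tendsto_sum_Ioc_cosSeriesTail {x : ℝ} (hx : x ∈ Set.Icc (0 : ℝ) 1) (N : ℕ) :
    Tendsto (fun M => ∑ k ∈ Ioc N M, cos (2 * π * k * x) / k ^ 2) atTop
      (𝓝 (cosSeriesTail x N)) :=
  (hasSum_cos_div_sq hx).tendsto_sum_Ioc (by simp) N

theorem abs_cosSeriesTail_le {x : ℝ} (hx : x ∈ Set.Ioo (0 : ℝ) 1) (N : ℕ) :
    |cosSeriesTail x N| ≤
      2 * (2 / ‖Complex.exp ((2 * π * x : ℝ) * Complex.I) - 1‖) * (((N : ℝ) + 1) ^ 2)⁻¹ := by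
  have hcos : cos (2 * π * x) ≠ 1 := by
    rw [Ne, cos_eq_one_iff_of_lt_of_lt (by nlinarith [pi_pos, hx.1]) (by nlinarith [pi_pos, hx.2])]
    exact (mul_pos two_pi_pos hx.1).ne'
  refine le_of_tendsto (tendsto_sum_Ioc_cosSeriesTail (Set.Ioo_subset_Icc_self hx) N).abs
    (Eventually.of_forall fun M => ?_)
  have hterm : ∀ k : ℕ, cos (2 * π * k * x) / k ^ 2 = ((k : ℝ) ^ 2)⁻¹ • cos (k * (2 * π * x)) :=
    fun k => by rw [smul_eq_mul, div_eq_inv_mul]; ring_nf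
  rw [← Real.norm_eq_abs, sum_congr rfl fun k _ => hterm k]
  refine (norm_sum_Ioc_smul_le_of_antitoneOn (m := N) (n := M)
    (z := fun k : ℕ => cos (k * (2 * π * x)))
    (antitoneOn_inv_sq.mono (Set.Ioi_subset_Ioi N.zero_le)) (fun k => by positivity)
    (fun n => by simpa only [Real.norm_eq_abs] using abs_sum_range_cos_mul_le hcos n)).trans_eq ?_
  rw [Nat.cast_add_one]

theorem tendsto_natCast_mul_cosSeriesTail_of_mem_Ioo {x : ℝ} (hx : x ∈ Set.Ioo (0 : ℝ) 1) :
    Tendsto (fun N : ℕ => (N : ℝ) * cosSeriesTail x N) atTop (𝓝 0) := by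
  set C := 2 * (2 / ‖Complex.exp ((2 * π * x : ℝ) * Complex.I) - 1‖)
  have hC : 0 ≤ C := by positivity
  refine squeeze_zero_norm (fun N => ?_)
    (by simpa using tendsto_one_div_add_atTop_nhds_zero_nat.const_mul C)
  have hN : (N : ℝ) * (((N : ℝ) + 1) ^ 2)⁻¹ ≤ ((N : ℝ) + 1)⁻¹ := by
    calc (N : ℝ) * (((N : ℝ) + 1) ^ 2)⁻¹ = N / (N + 1) * ((N : ℝ) + 1)⁻¹ := by
          rw [div_eq_mul_inv, mul_assoc, ← pow_two, inv_pow]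
      _ ≤ 1 * ((N : ℝ) + 1)⁻¹ := by
        gcongr; exact div_le_one_of_le₀ (by linarith) (by positivity)
      _ = ((N : ℝ) + 1)⁻¹ := one_mul _
  calc ‖(N : ℝ) * cosSeriesTail x N‖ ≤ N * (C * (((N : ℝ) + 1) ^ 2)⁻¹) := by
        rw [norm_mul, Real.norm_natCast, Real.norm_eq_abs]
        exact mul_le_mul_of_nonneg_left (abs_cosSeriesTail_le hx N) N.cast_nonneg
    _ ≤ C * ((N : ℝ) + 1)⁻¹ := by
        rw [mul_left_comm]; exact mul_le_mul_of_nonneg_left hN hC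

theorem tendsto_natCast_mul_cosSeriesTail {x : ℝ} (hx : x ∈ Set.Icc (0 : ℝ) 1) :
    Tendsto (fun N : ℕ => (N : ℝ) * cosSeriesTail x N) atTop
      (𝓝 (if x ∈ Set.Ioo (0 : ℝ) 1 then 0 else 1)) := by
  split_ifs with hx'
  · exact tendsto_natCast_mul_cosSeriesTail_of_mem_Ioo hx'
  have hx01 : x ∈ ({0, 1} : Set ℝ) := by
    rw [← Set.Icc_sdiff_Ioo_same zero_le_one]; exact ⟨hx, hx'⟩
  have htail : ∀ N, cosSeriesTail x N = π ^ 2 / 6 - ∑ k ∈ Icc 1 N, ((k : ℝ) ^ 2)⁻¹ := by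
    intro N
    rcases hx01 with rfl | rfl
    · simp only [cosSeriesTail, ne_eq, OfNat.ofNat_ne_zero, not_false_eq_true, zero_pow,
        sub_self, one_div, zero_add, mul_zero, cos_zero, sub_left_inj]
      ring
    · have hcos : ∀ k : ℕ, cos (2 * π * k * 1) = 1 := fun k => by
        rw [mul_one, mul_comm, cos_nat_mul_two_pi]
      simp only [cosSeriesTail, hcos, one_pow, sub_self, one_div, zero_add, sub_left_inj]
      ring
  simpa only [htail] using tendsto_natCast_mul_zeta_two_tail

theorem min_sub_mul_sub_sum_sin_mul_sin (s t : ℝ) (N : ℕ) :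
    min s t - s * t - ∑ k ∈ Icc 1 N,
        2 * sin (k * π * s) * sin (k * π * t) / ((k : ℝ) ^ 2 * π ^ 2) =
      (cosSeriesTail (|s - t| / 2) N - cosSeriesTail ((s + t) / 2) N) / π ^ 2 := by
  have hterm : ∀ k : ℕ, 2 * sin (k * π * s) * sin (k * π * t) / ((k : ℝ) ^ 2 * π ^ 2) =
      (cos (2 * π * k * (|s - t| / 2)) / k ^ 2 - cos (2 * π * k * ((s + t) / 2)) / k ^ 2) /
        π ^ 2 := by
    intro k
    have hdiff : 2 * π * k * (|s - t| / 2) = |k * π * s - k * π * t| := by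
      rw [← mul_sub, abs_mul, abs_of_nonneg (by positivity : (0 : ℝ) ≤ k * π)]; ring
    have hsum : 2 * π * k * ((s + t) / 2) = k * π * s + k * π * t := by ring
    rw [two_mul_sin_mul_sin, ← sub_div, div_div, hdiff, hsum, cos_abs]
  have hmin : min s t - s * t =
      (|s - t| / 2) ^ 2 - |s - t| / 2 - ((s + t) / 2) ^ 2 + (s + t) / 2 := by
    rcases le_total s t with h | h
    · rw [min_eq_left h, abs_of_nonpos (sub_nonpos.mpr h)]; ring
    · rw [min_eq_right h, abs_of_nonneg (sub_nonneg.mpr h)]; ring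
  rw [sum_congr rfl fun k _ => hterm k, ← sum_div, sum_sub_distrib, hmin, cosSeriesTail,
    cosSeriesTail]
  field_simp
  ring

/-- For all `s, t ∈ [0,1]`, the rescaled truncation error of Mercer's expansion of
the Brownian bridge covariance converges to `1/π²` if `s = t ∈ (0,1)` and to `0` otherwise. -/
theorem sin_fluctuation (s t : ℝ) (hs : s ∈ Set.Icc (0:ℝ) 1) (ht : t ∈ Set.Icc (0:ℝ) 1) :
    Tendsto (fun N : ℕ => (N : ℝ) *
        (min s t - s * t - ∑ k ∈ Finset.Icc 1 N,
          2 * Real.sin (k * Real.pi * s) * Real.sin (k * Real.pi * t) /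
            ((k : ℝ)^2 * Real.pi^2)))
      atTop (𝓝 (if s = t ∧ t ∈ Set.Ioo (0:ℝ) 1 then 1 / Real.pi^2 else 0)) := by
  obtain ⟨hs0, hs1⟩ := hs
  obtain ⟨ht0, ht1⟩ := ht
  have habs : |s - t| ≤ 1 := abs_sub_le_iff.mpr ⟨by linarith, by linarith⟩
  have hdiff : |s - t| / 2 ∈ Set.Icc (0 : ℝ) 1 := ⟨by positivity, by linarith⟩
  have hmid : (s + t) / 2 ∈ Set.Icc (0 : ℝ) 1 := ⟨by linarith, by linarith⟩
  have hlim := ((tendsto_natCast_mul_cosSeriesTail hdiff).sub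
    (tendsto_natCast_mul_cosSeriesTail hmid)).div_const (π ^ 2)
  simp_rw [min_sub_mul_sub_sum_sin_mul_sin, mul_div_assoc', mul_sub]
  convert hlim using 2
  by_cases hst : s = t
  · subst hst
    rw [sub_self, abs_zero, zero_div, add_self_div_two]
    split_ifs <;> simp_all
  · have hdiff' : |s - t| / 2 ∈ Set.Ioo (0 : ℝ) 1 :=
      ⟨by have := abs_pos.mpr (sub_ne_zero.mpr hst); positivity, by linarith⟩
    have hmid' : (s + t) / 2 ∈ Set.Ioo (0 : ℝ) 1 :=
      ⟨lt_of_le_of_ne hmid.1 fun h => hst (by linarith),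
        lt_of_le_of_ne hmid.2 fun h => hst (by linarith)⟩
    rw [if_neg fun h => hst h.1, if_pos hdiff', if_pos hmid', sub_self, zero_div]
end
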